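/- Let G be a finite (d_u, d_w)-regular bipartite graph with bipartition (U, W) and let {X_1, …, X_ℓ, Y} be a Godsil–McKay switching partition of its vertex set. Suppose X_i is of Type 1 (i.e., X_i ⊆ U), and let Y_i ⊆ Y be the set of vertices y ∈ Y that have exactly |X_i|/2 neighbors in X_i. Then every vertex of X_i is adjacent to exactly |Y_i|/2 vertices of Y_i; in particular |Y_i| is even. -/

import Mathlib

open Finset SimpleGraph Polynomial

open scoped Classical in
/-- Number of neighbors of `v` inside the finset `S`, in the graph `G`. -/
noncomputable def nbrsIn {V : Type*} (G : SimpleGraph V) (v : V) (S : Finset V) : ℕ :=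
  (S.filter (fun w => G.Adj v w)).card

/-- The `i`-th part `X_i` of a partition of the vertex set encoded by `f`
(`f v = some i` means `v ∈ X_i`, and `f v = none` means `v ∈ Y`). -/
def Xset {V : Type*} [Fintype V] {ℓ : ℕ} (f : V → Option (Fin ℓ)) (i : Fin ℓ) : Finset V :=
  Finset.univ.filter (fun v => f v = some i)

/-- The part `Y` of the partition of the vertex set encoded by `f`. -/
def Yset {V : Type*} [Fintype V] {ℓ : ℕ} (f : V → Option (Fin ℓ)) : Finset V :=
  Finset.univ.filter (fun v => f v = none)

/-- The partition `{X_1, …, X_ℓ, Y}` (encoded by `f`) is a Godsil–McKay switching partition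
of `G`: every `y ∈ Y` has `0`, `|X_i|/2` or `|X_i|` neighbors in each `X_i`, and for all `i, j`,
all vertices of `X_i` have the same number of neighbors in `X_j`. -/
def IsGMPartition {V : Type*} [Fintype V] (G : SimpleGraph V) {ℓ : ℕ}
    (f : V → Option (Fin ℓ)) : Prop :=
  (∀ y ∈ Yset f, ∀ i : Fin ℓ,
      nbrsIn G y (Xset f i) = 0 ∨ 2 * nbrsIn G y (Xset f i) = (Xset f i).card ∨
        nbrsIn G y (Xset f i) = (Xset f i).card) ∧
  (∀ i j : Fin ℓ, ∀ u ∈ Xset f i, ∀ v ∈ Xset f i,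
      nbrsIn G u (Xset f j) = nbrsIn G v (Xset f j))

/-- The pairs of vertices whose adjacency is flipped by the Godsil–McKay switching:
one of them lies in `Y`, the other in some `X_i`, and the former has exactly `|X_i|/2`
neighbors in `X_i`. -/
def gmFlip {V : Type*} [Fintype V] (G : SimpleGraph V) {ℓ : ℕ} (f : V → Option (Fin ℓ))
    (u v : V) : Prop :=
  (∃ i : Fin ℓ, f u = none ∧ f v = some i ∧ 2 * nbrsIn G u (Xset f i) = (Xset f i).card) ∨
  (∃ i : Fin ℓ, f v = none ∧ f u = some i ∧ 2 * nbrsIn G v (Xset f i) = (Xset f i).card)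

/-- The Godsil–McKay switched graph `G'`: adjacency within `X_1 ∪ … ∪ X_ℓ`, or within `Y`,
is as in `G`; adjacency between `y ∈ Y` and `x ∈ X_i` is complemented exactly when `y` has
`|X_i|/2` neighbors in `X_i` in `G`. -/
def gmSwitch {V : Type*} [Fintype V] (G : SimpleGraph V) {ℓ : ℕ} (f : V → Option (Fin ℓ)) :
    SimpleGraph V where
  Adj u v := (gmFlip G f u v ∧ ¬ G.Adj u v ∧ u ≠ v) ∨ (¬ gmFlip G f u v ∧ G.Adj u v)
  symm := by
    constructor
    intro u v h
    have hsymm : gmFlip G f u v ↔ gmFlip G f v u := ⟨Or.symm, Or.symm⟩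
    rcases h with ⟨h1, h2, h3⟩ | ⟨h1, h2⟩
    · exact Or.inl ⟨hsymm.mp h1, fun h => h2 (G.symm.symm _ _ h), h3.symm⟩
    · exact Or.inr ⟨fun h => h1 (hsymm.mpr h), G.symm.symm _ _ h2⟩
  loopless := by
    constructor
    intro u h
    rcases h with ⟨_, _, h3⟩ | ⟨_, h2⟩
    · exact h3 rfl
    · exact G.loopless.irrefl u h2

/-- `(U, W)` is a bipartition of the vertex set of `G` witnessing that `G` is a
`(du, dw)`-regular bipartite graph: every edge joins `U` to `W`, every vertex of `U` has
degree `du`, and every vertex of `W` has degree `dw`. -/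
def IsBiRegularBipartition {V : Type*} [Fintype V] [DecidableEq V] (G : SimpleGraph V)
    (U W : Finset V) (du dw : ℕ) : Prop :=
  U ∪ W = Finset.univ ∧ U ∩ W = ∅ ∧
  (∀ u v, G.Adj u v → (u ∈ U ∧ v ∈ W) ∨ (u ∈ W ∧ v ∈ U)) ∧
  (∀ u ∈ U, nbrsIn G u Finset.univ = du) ∧
  (∀ w ∈ W, nbrsIn G w Finset.univ = dw)

/-!
Regularity on `U ⊇ X_i` and condition (ii) give all vertices of `X_i` the same number of
neighbours in `Y`. A vertex of `Y \ Y_i` sees either none or all of `X_i`, so all vertices of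
`X_i` also have the same number `t` of neighbours in `Y \ Y_i`, hence in `Y_i`. Counting the
edges between `X_i` and `Y_i` from both sides gives `|X_i| t = |Y_i| |X_i| / 2`.
-/

open scoped Classical

namespace SimpleGraph

variable {V : Type*} (G : SimpleGraph V)

theorem nbrsIn_eq_card_iff {v : V} {S : Finset V} :
    nbrsIn G v S = #S ↔ ∀ w ∈ S, G.Adj v w :=
  card_filter_eq_iff

theorem nbrsIn_eq_zero_iff {v : V} {S : Finset V} :
    nbrsIn G v S = 0 ↔ ∀ w ∈ S, ¬ G.Adj v w :=
  card_filter_eq_zero_iff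

theorem nbrsIn_filter_add_nbrsIn_filter_not (v : V) (S : Finset V) (p : V → Prop)
    [DecidablePred p] :
    nbrsIn G v (S.filter p) + nbrsIn G v (S.filter fun w => ¬ p w) = nbrsIn G v S := by
  simp only [nbrsIn, filter_filter, ← card_filter_add_card_filter_not p (s := S.filter (G.Adj v)),
    and_comm]

theorem nbrsIn_filter_eq_of_nbrsIn_eq {u v : V} {S : Finset V} (p : V → Prop) [DecidablePred p]
    (hS : nbrsIn G u S = nbrsIn G v S)
    (hnot : nbrsIn G u (S.filter fun w => ¬ p w) = nbrsIn G v (S.filter fun w => ¬ p w)) :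
    nbrsIn G u (S.filter p) = nbrsIn G v (S.filter p) := by
  have hu := G.nbrsIn_filter_add_nbrsIn_filter_not u S p
  have hv := G.nbrsIn_filter_add_nbrsIn_filter_not v S p
  omega

theorem sum_nbrsIn_comm (A B : Finset V) :
    ∑ v ∈ A, nbrsIn G v B = ∑ y ∈ B, nbrsIn G y A := by
  simpa [nbrsIn, bipartiteAbove, bipartiteBelow, G.adj_comm] using
    sum_card_bipartiteAbove_eq_sum_card_bipartiteBelow G.Adj (s := A) (t := B)

theorem nbrsIn_eq_of_forall_nbrsIn_eq_zero_or_card {A S : Finset V}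
    (hS : ∀ y ∈ S, nbrsIn G y A = 0 ∨ nbrsIn G y A = #A) {u v : V}
    (hu : u ∈ A) (hv : v ∈ A) :
    nbrsIn G u S = nbrsIn G v S := by
  suffices key : ∀ x ∈ A, S.filter (G.Adj x) = S.filter (fun y => nbrsIn G y A = #A) by
    simp only [nbrsIn, key u hu, key v hv]
  intro x hx
  refine filter_congr fun y hy =>
    ⟨fun hxy => ?_, fun hyA => ((G.nbrsIn_eq_card_iff).1 hyA x hx).symm⟩
  exact (hS y hy).resolve_left fun hy0 => (G.nbrsIn_eq_zero_iff).1 hy0 x hx hxy.symm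

theorem two_mul_nbrsIn_eq_card {A B : Finset V} {v₀ : V} (hv₀ : v₀ ∈ A)
    (hA : ∀ v ∈ A, nbrsIn G v B = nbrsIn G v₀ B) (hB : ∀ y ∈ B, 2 * nbrsIn G y A = #A) :
    2 * nbrsIn G v₀ B = #B := by
  have hcount : #A * (2 * nbrsIn G v₀ B) = #A * #B :=
    calc #A * (2 * nbrsIn G v₀ B) = 2 * ∑ v ∈ A, nbrsIn G v B := by
          rw [sum_congr rfl hA, sum_const, smul_eq_mul]; ring
      _ = ∑ y ∈ B, 2 * nbrsIn G y A := by rw [sum_nbrsIn_comm, mul_sum]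
      _ = #A * #B := by rw [sum_congr rfl hB, sum_const, smul_eq_mul, mul_comm]
  exact Nat.eq_of_mul_eq_mul_left (card_pos.2 ⟨v₀, hv₀⟩) hcount

section Partition

variable [Fintype V] {ℓ : ℕ} (f : V → Option (Fin ℓ))

theorem nbrsIn_univ_eq_nbrsIn_Yset_add (v : V) :
    nbrsIn G v univ = nbrsIn G v (Yset f) + ∑ j, nbrsIn G v (Xset f j) := by
  simp only [nbrsIn, card_filter]
  rw [← sum_fiberwise univ f, Fintype.sum_option]
  rfl

theorem nbrsIn_Yset_eq_of_nbrsIn_Xset_eq {u v : V} (hdeg : nbrsIn G u univ = nbrsIn G v univ)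
    (hX : ∀ j, nbrsIn G u (Xset f j) = nbrsIn G v (Xset f j)) :
    nbrsIn G u (Yset f) = nbrsIn G v (Yset f) := by
  rw [nbrsIn_univ_eq_nbrsIn_Yset_add G f, nbrsIn_univ_eq_nbrsIn_Yset_add G f,
    Fintype.sum_congr _ _ hX] at hdeg
  omega

end Partition

end SimpleGraph

/-- In a `(du, dw)`-regular bipartite graph with a Godsil–McKay switching partition, let
`X_i` be a (nonempty) Type-1 set, i.e. `X_i ⊆ U`, and let `Y_i` be the set of vertices of
`Y` having exactly `|X_i|/2` neighbors in `X_i`. Then every vertex of `X_i` is adjacent to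
exactly `|Y_i|/2` vertices of `Y_i`; in particular `|Y_i|` is even. -/
theorem gm_type1_half_of_Yi {V : Type*} [Fintype V] [DecidableEq V]
    (G : SimpleGraph V) (U W : Finset V) (du dw : ℕ)
    (hG : IsBiRegularBipartition G U W du dw)
    {ℓ : ℕ} (f : V → Option (Fin ℓ)) (hf : IsGMPartition G f)
    (i : Fin ℓ) (h1 : Xset f i ⊆ U) (hne : (Xset f i).Nonempty) :
    (∀ v ∈ Xset f i,
        2 * nbrsIn G v ((Yset f).filter
            (fun y => 2 * nbrsIn G y (Xset f i) = (Xset f i).card)) =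
          ((Yset f).filter (fun y => 2 * nbrsIn G y (Xset f i) = (Xset f i).card)).card) ∧
    Even ((Yset f).filter (fun y => 2 * nbrsIn G y (Xset f i) = (Xset f i).card)).card := by
  obtain ⟨-, -, -, hdu, -⟩ := hG
  obtain ⟨hY, hX⟩ := hf
  set A := Xset f i
  set p : V → Prop := fun y => 2 * nbrsIn G y A = #A
  have hYset : ∀ u ∈ A, ∀ v ∈ A, nbrsIn G u (Yset f) = nbrsIn G v (Yset f) :=
    fun u hu v hv => G.nbrsIn_Yset_eq_of_nbrsIn_Xset_eq f
      (by rw [hdu u (h1 hu), hdu v (h1 hv)]) fun j => hX i j u hu v hv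
  have hrest : ∀ u ∈ A, ∀ v ∈ A, nbrsIn G u ((Yset f).filter fun y => ¬ p y) =
      nbrsIn G v ((Yset f).filter fun y => ¬ p y) := fun u hu v hv =>
    G.nbrsIn_eq_of_forall_nbrsIn_eq_zero_or_card (fun y hy => by
      obtain ⟨hyY, hyp⟩ := mem_filter.1 hy
      exact (hY y hyY i).imp_right (Or.resolve_left · hyp)) hu hv
  have hYi : ∀ u ∈ A, ∀ v ∈ A,
      nbrsIn G u ((Yset f).filter p) = nbrsIn G v ((Yset f).filter p) :=
    fun u hu v hv => G.nbrsIn_filter_eq_of_nbrsIn_eq p (hYset u hu v hv) (hrest u hu v hv)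
  obtain ⟨v₀, hv₀⟩ := hne
  have hhalf := G.two_mul_nbrsIn_eq_card hv₀ (fun v hv => hYi v hv v₀ hv₀)
    (fun y hy => (mem_filter.1 hy).2)
  exact ⟨fun v hv => hYi v hv v₀ hv₀ ▸ hhalf, ⟨_, hhalf ▸ two_mul _⟩⟩
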